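/- In the Butcher–Connes–Kreimer Hopf algebra of rooted trees, the coproduct defined recursively by Δ(B⁺(ω)) = B⁺(ω) ⊗ 1 + (id ⊗ B⁺)Δ(ω) (extended multiplicatively to forests, with Δ(1) = 1 ⊗ 1) is coassociative. -/

import Mathlib

/-- Rooted trees: a tree is a root with a list of branches.  Forests are lists of
trees, and `PT.node` is the operator `B⁺` attaching a forest to a new root. -/
inductive PT : Type
  | node : List PT → PT

/-- The Butcher–Connes–Kreimer coproduct on forests, given as a multiset of pairs
(pruned part, root part), i.e. the structure constants of `Δ` on the basis of
forests of the free algebra on rooted trees.  It is determined by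
`Δ(1) = 1 ⊗ 1`, multiplicativity `Δ(t·ω) = Δ(t)Δ(ω)`, and the recursion
`Δ(B⁺(ω)) = B⁺(ω) ⊗ 1 + (id ⊗ B⁺)Δ(ω)`. -/
def ΔBCK : List PT → Multiset (List PT × List PT)
  | [] => {([], [])}
  | PT.node l :: ω =>
      ((([PT.node l], ([] : List PT)) ::ₘ
          (ΔBCK l).map (fun p => (p.1, [PT.node p.2]))).bind
        (fun p => (ΔBCK ω).map (fun q => (p.1 ++ q.1, p.2 ++ q.2))))
decreasing_by
  all_goals simp_wf <;> omega

/-!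
`Δ` is multiplicative for the concatenation product of forests, hence so are
`(Δ ⊗ id) ∘ Δ` and `(id ⊗ Δ) ∘ Δ`, and it suffices to compare them on a single tree `B⁺(ω)`.
On `B⁺(ω)` both consist of `B⁺(ω) ⊗ 1 ⊗ 1`, the terms `ω' ⊗ B⁺(ω'') ⊗ 1` for `ω' ⊗ ω''` in
`Δ(ω)`, and the image under `id ⊗ id ⊗ B⁺` of the same map evaluated at `ω`; the latter
agree by induction on `ω`.
-/

section MulTensor

variable {α : Type*}

/-- The product of `H ⊗ H`, an element being encoded as the multiset of pairs of basis
monomials (forests) in its expansion. -/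
def mulTensor (s t : Multiset (List α × List α)) : Multiset (List α × List α) :=
  s.bind fun p => t.map fun q => (p.1 ++ q.1, p.2 ++ q.2)

def mulTensor₃ (s t : Multiset (List α × List α × List α)) :
    Multiset (List α × List α × List α) :=
  s.bind fun p => t.map fun q => (p.1 ++ q.1, p.2.1 ++ q.2.1, p.2.2 ++ q.2.2)

theorem mulTensor_one_right (s : Multiset (List α × List α)) : mulTensor s {([], [])} = s := by
  simpa [mulTensor] using Multiset.bind_singleton (s := s) id

theorem mulTensor_assoc (s t u : Multiset (List α × List α)) :
    mulTensor (mulTensor s t) u = mulTensor s (mulTensor t u) := by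
  simp [mulTensor, Multiset.bind_assoc, Multiset.bind_map, Multiset.map_bind]

end MulTensor

theorem ΔBCK_nil : ΔBCK [] = {([], [])} := by
  rw [ΔBCK]

theorem ΔBCK_singleton (l : List PT) :
    ΔBCK [PT.node l] =
      ([PT.node l], []) ::ₘ (ΔBCK l).map fun p => (p.1, [PT.node p.2]) := by
  rw [ΔBCK, ΔBCK_nil]
  exact mulTensor_one_right _

theorem ΔBCK_cons (l ω : List PT) :
    ΔBCK (PT.node l :: ω) = mulTensor (ΔBCK [PT.node l]) (ΔBCK ω) := by
  rw [ΔBCK_singleton, ΔBCK]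
  rfl

theorem ΔBCK_append (ω ω' : List PT) : ΔBCK (ω ++ ω') = mulTensor (ΔBCK ω) (ΔBCK ω') := by
  induction ω with
  | nil => simp [ΔBCK_nil, mulTensor]
  | cons t ω ih =>
    cases t with
    | node l => rw [List.cons_append, ΔBCK_cons, ΔBCK_cons l ω, ih, mulTensor_assoc]

def ΔBCKTensorId (ω : List PT) : Multiset (List PT × List PT × List PT) :=
  (ΔBCK ω).bind fun p => (ΔBCK p.1).map fun q => (q.1, q.2, p.2)

def idTensorΔBCK (ω : List PT) : Multiset (List PT × List PT × List PT) :=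
  (ΔBCK ω).bind fun p => (ΔBCK p.2).map fun q => (p.1, q.1, q.2)

theorem ΔBCKTensorId_append (ω ω' : List PT) :
    ΔBCKTensorId (ω ++ ω') = mulTensor₃ (ΔBCKTensorId ω) (ΔBCKTensorId ω') := by
  simp only [ΔBCKTensorId, mulTensor₃, ΔBCK_append, mulTensor, Multiset.bind_assoc,
    Multiset.bind_map, Multiset.map_bind, Multiset.map_map, Function.comp_def]
  exact Multiset.bind_congr fun _ _ => Multiset.bind_bind _ _

theorem idTensorΔBCK_append (ω ω' : List PT) :
    idTensorΔBCK (ω ++ ω') = mulTensor₃ (idTensorΔBCK ω) (idTensorΔBCK ω') := by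
  simp only [idTensorΔBCK, mulTensor₃, ΔBCK_append, mulTensor, Multiset.bind_assoc,
    Multiset.bind_map, Multiset.map_bind, Multiset.map_map, Function.comp_def]
  exact Multiset.bind_congr fun _ _ => Multiset.bind_bind _ _

theorem ΔBCKTensorId_singleton (l : List PT) :
    ΔBCKTensorId [PT.node l] =
      ([PT.node l], [], []) ::ₘ ((ΔBCK l).map (fun p => (p.1, [PT.node p.2], [])) +
        (ΔBCKTensorId l).map fun x => (x.1, x.2.1, [PT.node x.2.2])) := by
  simp only [ΔBCKTensorId, ΔBCK_singleton, Multiset.cons_bind, Multiset.bind_map,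
    Multiset.map_cons, Multiset.map_map, Multiset.map_bind, Function.comp_def]
  rw [Multiset.cons_add]

theorem idTensorΔBCK_singleton (l : List PT) :
    idTensorΔBCK [PT.node l] =
      ([PT.node l], [], []) ::ₘ ((ΔBCK l).map (fun p => (p.1, [PT.node p.2], [])) +
        (idTensorΔBCK l).map fun x => (x.1, x.2.1, [PT.node x.2.2])) := by
  simp only [idTensorΔBCK, ΔBCK_singleton, ΔBCK_nil, Multiset.cons_bind, Multiset.bind_map,
    Multiset.map_cons, Multiset.map_map, Multiset.map_bind, Multiset.map_singleton,
    Function.comp_def]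
  rw [Multiset.bind_cons, Multiset.singleton_add]

/-- the Butcher–Connes–Kreimer coproduct is coassociative:
`(Δ ⊗ id)Δ = (id ⊗ Δ)Δ` on every forest. -/
theorem BCK_coassociative (ω : List PT) :
    (ΔBCK ω).bind (fun p => (ΔBCK p.1).map (fun q => (q.1, q.2, p.2)))
      = (ΔBCK ω).bind (fun p => (ΔBCK p.2).map (fun q => (p.1, q.1, q.2))) :=
  match ω with
  | [] => by simp [ΔBCK_nil]
  | PT.node l :: ω => by
    show ΔBCKTensorId ([PT.node l] ++ ω) = idTensorΔBCK ([PT.node l] ++ ω)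
    rw [ΔBCKTensorId_append, idTensorΔBCK_append, ΔBCKTensorId_singleton,
      idTensorΔBCK_singleton]
    have hl : ΔBCKTensorId l = idTensorΔBCK l := BCK_coassociative l
    have hω : ΔBCKTensorId ω = idTensorΔBCK ω := BCK_coassociative ω
    rw [hl, hω]
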